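/- Under the assumption -log(1-P_e) ≤ H(Y|Z_X) and Z_X = f(X) deterministic, the Bayes error rate satisfies P_e ≤ 1 - exp(-(H(Y) - I(Z_X;X) + I(Z_X;X|Y))). -/

import Mathlib

/-!
For `Z = f ∘ X` the pair `(Z, X)` carries the same information as `X`, so `I(Z;X) = H(Z)` and
`I(Z;X|Y) = H(Z|Y)`. Hence `H(Y) - I(Z;X) + I(Z;X|Y) = H(Y) - H(Z) + H(Y,Z) - H(Y) = H(Y|Z)`,
and the assumed Fano-type bound `-log(1 - P_e) ≤ H(Y|Z)` rearranges to the claim.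
-/

open Finset Real

noncomputable section

/-- Probability that a random variable `X` on a finite sample space with weights `μ`
takes the value `x`. -/
def prob {Ω : Type*} [Fintype Ω] (μ : Ω → ℝ) {α : Type*} [Fintype α] [DecidableEq α]
    (X : Ω → α) (x : α) : ℝ :=
  ∑ ω, if X ω = x then μ ω else 0

/-- Shannon entropy (natural log) of a discrete random variable. -/
def entropy {Ω : Type*} [Fintype Ω] (μ : Ω → ℝ) {α : Type*} [Fintype α] [DecidableEq α]
    (X : Ω → α) : ℝ :=
  -∑ x, prob μ X x * Real.log (prob μ X x)

/-- Conditional Shannon entropy `H(X | Z)`. -/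
def condEntropy {Ω : Type*} [Fintype Ω] (μ : Ω → ℝ) {α β : Type*}
    [Fintype α] [DecidableEq α] [Fintype β] [DecidableEq β]
    (X : Ω → α) (Z : Ω → β) : ℝ :=
  -∑ x, ∑ z, prob μ (fun ω => (X ω, Z ω)) (x, z) *
      Real.log (prob μ (fun ω => (X ω, Z ω)) (x, z) / prob μ Z z)

/-- Mutual information `I(X ; Y)`. -/
def mutualInfo {Ω : Type*} [Fintype Ω] (μ : Ω → ℝ) {α β : Type*}
    [Fintype α] [DecidableEq α] [Fintype β] [DecidableEq β]
    (X : Ω → α) (Y : Ω → β) : ℝ :=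
  ∑ x, ∑ y, prob μ (fun ω => (X ω, Y ω)) (x, y) *
      Real.log (prob μ (fun ω => (X ω, Y ω)) (x, y) / (prob μ X x * prob μ Y y))

/-- Conditional mutual information `I(X ; Y | Z)`. -/
def condMutualInfo {Ω : Type*} [Fintype Ω] (μ : Ω → ℝ) {α β γ : Type*}
    [Fintype α] [DecidableEq α] [Fintype β] [DecidableEq β] [Fintype γ] [DecidableEq γ]
    (X : Ω → α) (Y : Ω → β) (Z : Ω → γ) : ℝ :=
  ∑ x, ∑ y, ∑ z, prob μ (fun ω => (X ω, Y ω, Z ω)) (x, y, z) *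
      Real.log (prob μ Z z * prob μ (fun ω => (X ω, Y ω, Z ω)) (x, y, z) /
        (prob μ (fun ω => (X ω, Z ω)) (x, z) * prob μ (fun ω => (Y ω, Z ω)) (y, z)))

/-- Bayes error rate of predicting `Y` from `X`:
`P_e = E[1 - max_y P(Y = y | X)] = 1 - ∑_x max_y P(Y = y, X = x)`. -/
def bayesError {Ω : Type*} [Fintype Ω] (μ : Ω → ℝ) {α β : Type*}
    [Fintype α] [DecidableEq α] [Fintype β] [DecidableEq β] [Nonempty β]
    (X : Ω → α) (Y : Ω → β) : ℝ :=
  1 - ∑ x, (Finset.univ.sup' Finset.univ_nonempty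
      fun y => prob μ (fun ω => (Y ω, X ω)) (y, x))

section Prob

variable {Ω : Type*} [Fintype Ω] (μ : Ω → ℝ) {α β : Type*} [Fintype α] [DecidableEq α]
  [Fintype β] [DecidableEq β]

lemma sum_prob_mul_eq_sum (g : Ω → α) (L : α → ℝ) :
    ∑ a, prob μ g a * L a = ∑ ω, μ ω * L (g ω) := by
  simp only [prob, Finset.sum_mul, ite_mul, zero_mul]
  rw [Finset.sum_comm]
  simp

lemma prob_apply_pos (hμ : ∀ ω, 0 ≤ μ ω) (g : Ω → α) {ω₀ : Ω} (h : 0 < μ ω₀) :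
    0 < prob μ g (g ω₀) :=
  Finset.sum_pos' (fun ω _ => by split_ifs <;> simp [hμ ω])
    ⟨ω₀, Finset.mem_univ _, by simpa using h⟩

lemma prob_comp_of_injective (g : Ω → α) {e : α → β} (he : Function.Injective e) (a : α) :
    prob μ (fun ω => e (g ω)) (e a) = prob μ g a := by
  simp only [prob, he.eq_iff]

lemma prob_pair_comp_self (g : Ω → α) (h : α → β) (a : α) :
    prob μ (fun ω => (h (g ω), g ω)) (h a, a) = prob μ g a :=
  prob_comp_of_injective μ g (e := fun a => (h a, a)) (fun _ _ hab => congrArg Prod.snd hab) a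

lemma prob_pair_swap (g : Ω → α) (h : Ω → β) (a : α) (b : β) :
    prob μ (fun ω => (h ω, g ω)) (b, a) = prob μ (fun ω => (g ω, h ω)) (a, b) :=
  prob_comp_of_injective μ (fun ω => (g ω, h ω)) Prod.swap_injective (a, b)

end Prob

section Expectation

variable {Ω : Type*} [Fintype Ω] (μ : Ω → ℝ) {α β γ : Type*} [Fintype α] [DecidableEq α]
  [Fintype β] [DecidableEq β] [Fintype γ] [DecidableEq γ]

lemma entropy_eq_sum (X : Ω → α) :
    entropy μ X = -∑ ω, μ ω * Real.log (prob μ X (X ω)) := by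
  rw [entropy, sum_prob_mul_eq_sum μ X]

lemma condEntropy_eq_sum (X : Ω → α) (Z : Ω → β) :
    condEntropy μ X Z = -∑ ω, μ ω *
      Real.log (prob μ (fun ω => (X ω, Z ω)) (X ω, Z ω) / prob μ Z (Z ω)) := by
  rw [condEntropy, ← sum_prob_mul_eq_sum μ (fun ω => (X ω, Z ω))
    (fun p => Real.log (prob μ (fun ω => (X ω, Z ω)) p / prob μ Z p.2)), Fintype.sum_prod_type]

lemma mutualInfo_eq_sum (X : Ω → α) (Y : Ω → β) :
    mutualInfo μ X Y = ∑ ω, μ ω * Real.log (prob μ (fun ω => (X ω, Y ω)) (X ω, Y ω) /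
      (prob μ X (X ω) * prob μ Y (Y ω))) := by
  rw [mutualInfo, ← sum_prob_mul_eq_sum μ (fun ω => (X ω, Y ω))
    (fun p => Real.log (prob μ (fun ω => (X ω, Y ω)) p / (prob μ X p.1 * prob μ Y p.2))),
    Fintype.sum_prod_type]

lemma condMutualInfo_eq_sum (X : Ω → α) (Y : Ω → β) (Z : Ω → γ) :
    condMutualInfo μ X Y Z = ∑ ω, μ ω * Real.log (prob μ Z (Z ω) *
      prob μ (fun ω => (X ω, Y ω, Z ω)) (X ω, Y ω, Z ω) /
      (prob μ (fun ω => (X ω, Z ω)) (X ω, Z ω) * prob μ (fun ω => (Y ω, Z ω)) (Y ω, Z ω))) := by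
  rw [condMutualInfo, ← sum_prob_mul_eq_sum μ (fun ω => (X ω, Y ω, Z ω))
    (fun p => Real.log (prob μ Z p.2.2 * prob μ (fun ω => (X ω, Y ω, Z ω)) p /
      (prob μ (fun ω => (X ω, Z ω)) (p.1, p.2.2) * prob μ (fun ω => (Y ω, Z ω)) (p.2.1, p.2.2)))),
    Fintype.sum_prod_type]
  simp only [Fintype.sum_prod_type]

end Expectation

theorem condEntropy_comp_eq_entropy_sub_mutualInfo_add_condMutualInfo {Ω : Type*} [Fintype Ω]
    (μ : Ω → ℝ) (hμ : ∀ ω, 0 ≤ μ ω) {α β γ : Type*} [Fintype α] [DecidableEq α]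
    [Fintype β] [DecidableEq β] [Fintype γ] [DecidableEq γ]
    (X : Ω → α) (Y : Ω → β) (f : α → γ) :
    condEntropy μ Y (fun ω => f (X ω)) =
      entropy μ Y - mutualInfo μ (fun ω => f (X ω)) X +
        condMutualInfo μ (fun ω => f (X ω)) X Y := by
  rw [condEntropy_eq_sum, entropy_eq_sum, mutualInfo_eq_sum, condMutualInfo_eq_sum,
    ← Finset.sum_neg_distrib, ← Finset.sum_neg_distrib, ← Finset.sum_sub_distrib,
    ← Finset.sum_add_distrib]
  refine Finset.sum_congr rfl fun ω _ => ?_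
  rcases (hμ ω).eq_or_lt with h0 | h0
  · simp [← h0]
  have hZXY : prob μ (fun ω => (f (X ω), X ω, Y ω)) (f (X ω), X ω, Y ω) =
      prob μ (fun ω => (X ω, Y ω)) (X ω, Y ω) :=
    prob_pair_comp_self μ (fun ω => (X ω, Y ω)) (fun p => f p.1) (X ω, Y ω)
  rw [prob_pair_comp_self μ X f, hZXY, prob_pair_swap μ Y (fun ω => f (X ω))]
  -- On an atom of positive mass every probability is positive, so the logarithms split.
  have pY := prob_apply_pos μ hμ Y h0
  have pZ := prob_apply_pos μ hμ (fun ω => f (X ω)) h0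
  have pX := prob_apply_pos μ hμ X h0
  have pYZ := prob_apply_pos μ hμ (fun ω => (Y ω, f (X ω))) h0
  have pXY := prob_apply_pos μ hμ (fun ω => (X ω, Y ω)) h0
  rw [Real.log_div pYZ.ne' pZ.ne', Real.log_div pX.ne' (by positivity),
    Real.log_div (by positivity) (by positivity), Real.log_mul pZ.ne' pX.ne',
    Real.log_mul pY.ne' pXY.ne', Real.log_mul pYZ.ne' pXY.ne']
  ring

theorem bayesError_upper_bound_pretraining_general
    {Ω : Type*} [Fintype Ω] (μ : Ω → ℝ) (hμ : ∀ ω, 0 ≤ μ ω)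
    {α γ : Type*} [Fintype α] [DecidableEq α] [Fintype γ] [DecidableEq γ]
    (X : Ω → α) (Y : Ω → Bool) (f : α → γ)
    (hPe : bayesError μ (fun ω => f (X ω)) Y < 1)
    (hFM : -Real.log (1 - bayesError μ (fun ω => f (X ω)) Y) ≤
      condEntropy μ Y (fun ω => f (X ω))) :
    bayesError μ (fun ω => f (X ω)) Y ≤
      1 - Real.exp (-(entropy μ Y - mutualInfo μ (fun ω => f (X ω)) X +
        condMutualInfo μ (fun ω => f (X ω)) X Y)) := by
  rw [← condEntropy_comp_eq_entropy_sub_mutualInfo_add_condMutualInfo μ hμ X Y f]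
  have hexp := (Real.le_log_iff_exp_le (sub_pos.2 hPe)).1 (neg_le.1 hFM)
  linarith

theorem bayesError_upper_bound_pretraining
    {Ω : Type*} [Fintype Ω] (μ : Ω → ℝ) (hμ : ∀ ω, 0 ≤ μ ω) (hsum : ∑ ω, μ ω = 1)
    {α γ : Type*} [Fintype α] [DecidableEq α] [Fintype γ] [DecidableEq γ]
    (X : Ω → α) (Y : Ω → Bool) (f : α → γ)
    (hPe : bayesError μ (fun ω => f (X ω)) Y < 1)
    (hFM : -Real.log (1 - bayesError μ (fun ω => f (X ω)) Y) ≤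
      condEntropy μ Y (fun ω => f (X ω))) :
    bayesError μ (fun ω => f (X ω)) Y ≤
      1 - Real.exp (-(entropy μ Y - mutualInfo μ (fun ω => f (X ω)) X +
        condMutualInfo μ (fun ω => f (X ω)) X Y)) :=
  bayesError_upper_bound_pretraining_general μ hμ X Y f hPe hFM
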